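/- The contextual fraction is subadditive in the following product sense for [0,1]-valued quantifiers: if CF(B_i) = λ_i for i = 1,2 (with optimal decompositions B_i = λ_i B_i' + (1−λ_i) q_i, q_i ∈ K_i), then the tensor product behavior B₁ ⊗ B₂ admits a decomposition witnessing CF(B₁ ⊗ B₂) ≤ λ₁ + λ₂ − λ₁λ₂, provided K₁ ⊗ K₂-type products of noncontextual behaviors are noncontextual and the set of behaviors is closed under tensor products and convex combinations. -/
import Mathlib


/-- Kronecker (tensor) product of two vectors. -/
def tensorVec {m n : ℕ} (x : Fin m → ℝ) (y : Fin n → ℝ) : Fin m × Fin n → ℝ :=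
  fun ij => x ij.1 * y ij.2

/-- Contextual fraction with behavior set `X` and noncontextual set `K`. -/
noncomputable def contextualFraction {ι : Type*} (X K : Set (ι → ℝ))
    (B : ι → ℝ) : ℝ :=
  sInf {l : ℝ | l ∈ Set.Icc (0 : ℝ) 1 ∧
    ∃ B' ∈ X, ∃ q ∈ K, B = l • B' + (1 - l) • q}

/-- Subadditivity of the contextual fraction under tensor products:
if `B i = λ i • B' i + (1 − λ i) • q i` are optimal decompositions with
`q i ∈ K i`, and products of noncontextual behaviors are noncontextual while
behaviors are closed under tensor products and convex combinations, then
`CF(B₁ ⊗ B₂) ≤ λ₁ + λ₂ − λ₁λ₂`. -/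
theorem contextualFraction_tensor {m n : ℕ}
    (X₁ K₁ : Set (Fin m → ℝ)) (X₂ K₂ : Set (Fin n → ℝ))
    (X K : Set (Fin m × Fin n → ℝ))
    (hK₁X₁ : K₁ ⊆ X₁) (hK₂X₂ : K₂ ⊆ X₂) (hKX : K ⊆ X)
    (hXconv : Convex ℝ X)
    (hKtensor : ∀ q₁ ∈ K₁, ∀ q₂ ∈ K₂, tensorVec q₁ q₂ ∈ K)
    (hXtensor : ∀ b₁ ∈ X₁, ∀ b₂ ∈ X₂, tensorVec b₁ b₂ ∈ X)
    (B₁ B₁' : Fin m → ℝ) (B₂ B₂' : Fin n → ℝ) (q₁ : Fin m → ℝ) (q₂ : Fin n → ℝ)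
    (hB₁ : B₁ ∈ X₁) (hB₂ : B₂ ∈ X₂) (hB₁' : B₁' ∈ X₁) (hB₂' : B₂' ∈ X₂)
    (hq₁ : q₁ ∈ K₁) (hq₂ : q₂ ∈ K₂)
    (l₁ l₂ : ℝ) (hl₁ : l₁ ∈ Set.Icc (0 : ℝ) 1) (hl₂ : l₂ ∈ Set.Icc (0 : ℝ) 1)
    (hdec₁ : B₁ = l₁ • B₁' + (1 - l₁) • q₁)
    (hdec₂ : B₂ = l₂ • B₂' + (1 - l₂) • q₂)
    (hopt₁ : contextualFraction X₁ K₁ B₁ = l₁)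
    (hopt₂ : contextualFraction X₂ K₂ B₂ = l₂) :
    contextualFraction X K (tensorVec B₁ B₂) ≤ l₁ + l₂ - l₁ * l₂ := by
  obtain ⟨h10, h11⟩ := hl₁
  obtain ⟨h20, h21⟩ := hl₂
  set lam : ℝ := l₁ + l₂ - l₁ * l₂ with hlam
  have hlam0 : 0 ≤ lam := by nlinarith
  have hlam1 : lam ≤ 1 := by nlinarith
  have hbdd : BddBelow {l : ℝ | l ∈ Set.Icc (0 : ℝ) 1 ∧
      ∃ B' ∈ X, ∃ q ∈ K, tensorVec B₁ B₂ = l • B' + (1 - l) • q} :=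
    ⟨0, fun x hx => hx.1.1⟩
  apply csInf_le hbdd
  refine ⟨⟨hlam0, hlam1⟩, ?_⟩
  by_cases hz : lam = 0
  · have hl10 : l₁ = 0 := by nlinarith
    have hl20 : l₂ = 0 := by nlinarith
    refine ⟨tensorVec B₁ B₂, hXtensor _ hB₁ _ hB₂, tensorVec q₁ q₂,
      hKtensor _ hq₁ _ hq₂, ?_⟩
    funext ij
    have e1 : B₁ ij.1 = q₁ ij.1 := by
      rw [hdec₁]; simp [hl10]
    have e2 : B₂ ij.2 = q₂ ij.2 := by
      rw [hdec₂]; simp [hl20]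
    simp [tensorVec, hz, e1, e2]
  · refine ⟨(l₁ / lam) • tensorVec B₁' B₂ +
        (((1 - l₁) * l₂) / lam) • tensorVec q₁ B₂', ?_, tensorVec q₁ q₂,
      hKtensor _ hq₁ _ hq₂, ?_⟩
    · apply hXconv (hXtensor _ hB₁' _ hB₂) (hXtensor _ (hK₁X₁ hq₁) _ hB₂')
        (div_nonneg h10 hlam0) (div_nonneg (mul_nonneg (by linarith) h20) hlam0)
      field_simp
      ring
    · funext ij
      have e1 : B₁ ij.1 = l₁ * B₁' ij.1 + (1 - l₁) * q₁ ij.1 := by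
        rw [hdec₁]; simp
      have e2 : B₂ ij.2 = l₂ * B₂' ij.2 + (1 - l₂) * q₂ ij.2 := by
        rw [hdec₂]; simp
      simp only [tensorVec, Pi.add_apply, Pi.smul_apply, smul_eq_mul]
      rw [e1, e2]
      field_simp
      ring
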